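/- 2π · ∫_{−1}^{1} g_2(t) · (3t² − 1)/2 dt = −π²/32. -/

import Mathlib

/-!
With `φ(t) = π - arccos t` and `s(t) = √(1 - t²)` one has `φ' = 1 / s` and `s' = -t / s`, so
`2π g₂ P₂ = φ s P₂ - t P₂ / 2`, where `P₂(t) = (3t² - 1) / 2`, has the elementary antiderivative
`φ s (3t³/8 - 7t/16) - φ²/32 - 9t⁴/32 + 11t²/32`. Since `φ(-1) = 0` and `φ(1) = π`, only the
term `-φ²/32` survives in the difference of its values at `±1`, giving `-π²/32`.
-/

/-- C. Berg's function `g₂`. -/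
noncomputable def bergG2 (t : ℝ) : ℝ :=
  (1 / (2 * Real.pi)) * ((Real.pi - Real.arccos t) * (1 - t ^ 2) ^ ((1 : ℝ) / 2) - t / 2)

open Real

lemma bergG2_eq_sqrt (t : ℝ) :
    bergG2 t = (1 / (2 * π)) * ((π - arccos t) * √(1 - t ^ 2) - t / 2) := by
  rw [bergG2, sqrt_eq_rpow]

lemma two_pi_mul_bergG2 (t : ℝ) :
    2 * π * bergG2 t = (π - arccos t) * √(1 - t ^ 2) - t / 2 := by
  rw [bergG2_eq_sqrt, ← mul_assoc, mul_one_div_cancel (by positivity), one_mul]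

@[fun_prop]
lemma continuous_bergG2 : Continuous bergG2 := by
  simp only [funext bergG2_eq_sqrt]
  fun_prop

lemma hasDerivAt_pi_sub_arccos {t : ℝ} (h₁ : t ≠ -1) (h₂ : t ≠ 1) :
    HasDerivAt (fun x => π - arccos x) (1 / √(1 - t ^ 2)) t := by
  simpa using (hasDerivAt_arccos h₁ h₂).const_sub π

lemma hasDerivAt_sqrt_one_sub_sq {t : ℝ} (ht : 1 - t ^ 2 ≠ 0) :
    HasDerivAt (fun x => √(1 - x ^ 2)) (-t / √(1 - t ^ 2)) t := by
  have hinner : HasDerivAt (fun x : ℝ => 1 - x ^ 2) (-(2 * t)) t := by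
    simpa using (hasDerivAt_pow 2 t).const_sub 1
  convert hinner.sqrt ht using 1
  ring

noncomputable def bergG2LegendreAntideriv (t : ℝ) : ℝ :=
  (π - arccos t) * √(1 - t ^ 2) * (3 / 8 * t ^ 3 - 7 / 16 * t)
    - (π - arccos t) ^ 2 / 32 - 9 / 32 * t ^ 4 + 11 / 32 * t ^ 2

lemma continuous_bergG2LegendreAntideriv : Continuous bergG2LegendreAntideriv := by
  unfold bergG2LegendreAntideriv
  fun_prop

lemma hasDerivAt_bergG2LegendreAntideriv {t : ℝ} (ht : t ∈ Set.Ioo (-1 : ℝ) 1) :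
    HasDerivAt bergG2LegendreAntideriv (2 * π * (bergG2 t * ((3 * t ^ 2 - 1) / 2))) t := by
  have h_pos : 0 < 1 - t ^ 2 := by nlinarith [ht.1, ht.2]
  have hs : 0 < √(1 - t ^ 2) := sqrt_pos.mpr h_pos
  have hs_sq : √(1 - t ^ 2) ^ 2 = 1 - t ^ 2 := sq_sqrt h_pos.le
  have hφ := hasDerivAt_pi_sub_arccos ht.1.ne' ht.2.ne
  have hq : HasDerivAt (fun x : ℝ => 3 / 8 * x ^ 3 - 7 / 16 * x) _ t :=
    ((hasDerivAt_pow 3 t).const_mul (3 / 8 : ℝ)).sub ((hasDerivAt_id' t).const_mul (7 / 16 : ℝ))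
  have hF : HasDerivAt bergG2LegendreAntideriv _ t :=
    ((((hφ.fun_mul (hasDerivAt_sqrt_one_sub_sq h_pos.ne')).fun_mul hq).sub
      ((hφ.fun_pow 2).div_const 32)).sub ((hasDerivAt_pow 4 t).const_mul (9 / 32))).add
      ((hasDerivAt_pow 2 t).const_mul (11 / 32))
  refine hF.congr_deriv ?_
  rw [← mul_assoc (2 * π), two_pi_mul_bergG2]
  have hs_inv : (√(1 - t ^ 2))⁻¹ * √(1 - t ^ 2) = 1 := inv_mul_cancel₀ hs.ne'
  have hs_div : (1 - t ^ 2) * (√(1 - t ^ 2))⁻¹ = √(1 - t ^ 2) := by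
    rw [mul_inv_eq_iff_eq_mul₀ hs.ne', ← sq, hs_sq]
  linear_combination (3 / 8 * t ^ 3 - 7 / 16 * t) * hs_inv
    + (π - arccos t) * (6 * t ^ 2 - 1) / 16 * hs_div

/-- `2π ∫_{−1}^{1} g₂(t) (3t²−1)/2 dt = −π²/32`. -/
theorem berg_g2_initial_value_2 :
    2 * Real.pi * ∫ t in (-1 : ℝ)..1, bergG2 t * ((3 * t ^ 2 - 1) / 2)
      = -(Real.pi ^ 2 / 32) := by
  rw [← intervalIntegral.integral_const_mul,
    intervalIntegral.integral_eq_sub_of_hasDerivAt_of_le (by norm_num)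
      continuous_bergG2LegendreAntideriv.continuousOn
      (fun t ht => hasDerivAt_bergG2LegendreAntideriv ht)
      (by apply Continuous.intervalIntegrable; fun_prop)]
  simp only [bergG2LegendreAntideriv, arccos_one, arccos_neg_one]
  norm_num
  ring
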